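/- Define q_1 = • and q_{n+1} = q_n·• − B⁺(q_n) in the span of planar forests (elements of P_↘(n)). Then for every forest F = t_1…t_n with trees t_i, the element q_{n+1} acted via the P_↘-structure on (•, t_1, …, t_n) is a primitive element x of the infinitesimal Hopf algebra H satisfying γ(x) = t_1…t_n. Hence x = γ^{-1}_{|Prim(H)}(F), giving an inverse to the restriction of γ to primitive elements. -/

import Mathlib

open scoped TensorProduct

/-- Planar rooted trees; `PTree.node []` is the single-vertex tree `•`. -/
inductive PTree : Type
  | node : List PTree → PTree

/-- Planar rooted forests. -/
abbrev Forest : Type := List PTree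

instance : Monoid Forest where
  mul := fun x y => List.append x y
  one := ([] : List PTree)
  mul_assoc := List.append_assoc
  one_mul := fun _ => rfl
  mul_one := List.append_nil

/-- The infinitesimal Hopf algebra `H` of planar rooted forests. -/
abbrev H : Type := MonoidAlgebra ℚ Forest

/-- The basis element of `H` indexed by a forest. -/
noncomputable def bf (F : Forest) : H := MonoidAlgebra.of ℚ Forest F

/-- The operator `B⁺` grafting a forest on a common new root, extended linearly. -/
noncomputable def Bplus : H →ₗ[ℚ] H :=
  (Finsupp.lift H ℚ Forest fun F => bf [PTree.node F]) ∘ₗ (MonoidAlgebra.coeffLinearEquiv ℚ).toLinearMap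

/-- The map `γ`: `t_1…t_n ↦ δ_{t_1,•} t_2…t_n`, extended linearly. -/
noncomputable def gammaH : H →ₗ[ℚ] H :=
  (Finsupp.lift H ℚ Forest fun F =>
    match F with
    | PTree.node [] :: rest => bf rest
    | _ => 0) ∘ₗ (MonoidAlgebra.coeffLinearEquiv ℚ).toLinearMap

/-- Grafting on the root. -/
def graftRoot (F : Forest) : Forest → Forest
  | [] => F
  | .node c :: rest => .node (F ++ c) :: rest

/-- The product `↘` extended bilinearly to `H`. -/
noncomputable def grH : H →ₗ[ℚ] H →ₗ[ℚ] H :=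
  (Finsupp.lift (H →ₗ[ℚ] H) ℚ Forest fun F =>
    (Finsupp.lift H ℚ Forest fun G => bf (graftRoot F G)) ∘ₗ (MonoidAlgebra.coeffLinearEquiv ℚ).toLinearMap) ∘ₗ (MonoidAlgebra.coeffLinearEquiv ℚ).toLinearMap

/-- The action of the elements `q_1 = •`, `q_{n+1} = q_n·• − B⁺(q_n)` of `P_↘(n+1)` on
`(x, t_1, …, t_n)`: `q_{n+1}·(x,t_1,…,t_n) = q_2·(q_n·(x,t_1,…,t_{n−1}), t_n)` with
`q_2·(x,t) = x·t − x ↘ t`. -/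
noncomputable def qAct : H → List PTree → H
  | x, [] => x
  | x, t :: rest => qAct (x * bf [t] - grH x (bf [t])) rest

/-! The recursion defining `q_{n+1}` multiplies by one tree at a time, so both claims go by
induction on the forest. Writing a tree as `t = B⁺(c)`, one has `x ↘ t = B⁺(x c)`, and for
primitive `x` the element `x B⁺(c) − B⁺(x c)` is primitive by the two cocycle rules for `Δ`.
On the `γ` side, `γ(x t − x ↘ t) = γ(x) t`: on a forest `F ≠ 1` the graft `F ↘ t` is a single
tree that is not `•`, and on `F = 1` the graft and the product coincide. -/

section Primitive

variable {R A : Type*} [CommSemiring R] [Ring A] [Algebra R A]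

def IsPrimitive (Δ : A →ₗ[R] A ⊗[R] A) (x : A) : Prop :=
  Δ x = x ⊗ₜ 1 + 1 ⊗ₜ x

lemma lTensor_tmul_one_mul (B : A →ₗ[R] A) (x : A) (y : A ⊗[R] A) :
    B.lTensor A ((x ⊗ₜ (1 : A)) * y) = (x ⊗ₜ (1 : A)) * B.lTensor A y := by
  induction y using TensorProduct.induction_on with
  | zero => simp
  | tmul a b => simp [Algebra.TensorProduct.tmul_mul_tmul]
  | add a b ha hb => simp [mul_add, ha, hb]

lemma IsPrimitive.mul_sub_map_mul {Δ : A →ₗ[R] A ⊗[R] A} {B : A →ₗ[R] A}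
    (hΔm : ∀ x y : A, Δ (x * y) = (x ⊗ₜ (1 : A)) * Δ y + Δ x * ((1 : A) ⊗ₜ y) - x ⊗ₜ y)
    (hΔB : ∀ x : A, Δ (B x) = B x ⊗ₜ 1 + B.lTensor A (Δ x))
    {x : A} (hx : IsPrimitive Δ x) (y : A) :
    IsPrimitive Δ (x * B y - B (x * y)) := by
  unfold IsPrimitive at hx ⊢
  rw [map_sub, hΔm, hΔB, hΔB, hΔm, hx]
  simp only [add_mul, mul_add, Algebra.TensorProduct.tmul_mul_tmul, one_mul, mul_one,
    map_add, map_sub, lTensor_tmul_one_mul, LinearMap.lTensor_tmul, TensorProduct.sub_tmul,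
    TensorProduct.tmul_sub]
  abel

end Primitive

lemma bf_mul (F G : Forest) : bf F * bf G = bf (F ++ G) :=
  (map_mul (MonoidAlgebra.of ℚ Forest) F G).symm

lemma bf_nil : bf [] = 1 := map_one (MonoidAlgebra.of ℚ Forest)

lemma single_eq_smul_bf (F : Forest) (r : ℚ) : MonoidAlgebra.single F r = r • bf F := by
  simp [bf]

lemma Bplus_bf (F : Forest) : Bplus (bf F) = bf [.node F] := by
  simp [Bplus, bf]

lemma gammaH_bf_nil : gammaH (bf []) = 0 := by
  simp [gammaH, bf]

lemma gammaH_bf_bullet_cons (F : Forest) : gammaH (bf (.node [] :: F)) = bf F := by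
  simp [gammaH, bf]

lemma gammaH_bf_node_cons_cons (t : PTree) (c F : Forest) :
    gammaH (bf (.node (t :: c) :: F)) = 0 := by
  simp [gammaH, bf]

lemma grH_bf_bf (F G : Forest) : grH (bf F) (bf G) = bf (graftRoot F G) := by
  simp [grH, bf]

lemma graftRoot_nil_left (G : Forest) : graftRoot [] G = G := by
  cases G with
  | nil => rfl
  | cons t G => cases t; rfl

lemma gammaH_bf_append {F : Forest} (hF : F ≠ []) (G : Forest) :
    gammaH (bf (F ++ G)) = gammaH (bf F) * bf G := by
  obtain ⟨⟨_ | ⟨t, c⟩⟩, F, rfl⟩ := List.exists_cons_of_ne_nil hF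
  · rw [List.cons_append, gammaH_bf_bullet_cons, gammaH_bf_bullet_cons, bf_mul]
  · rw [List.cons_append, gammaH_bf_node_cons_cons, gammaH_bf_node_cons_cons, zero_mul]

lemma gammaH_bf_graftRoot {F G : Forest} (hF : F ≠ []) (hG : G ≠ []) :
    gammaH (bf (graftRoot F G)) = 0 := by
  obtain ⟨t, F, rfl⟩ := List.exists_cons_of_ne_nil hF
  obtain ⟨⟨c⟩, G, rfl⟩ := List.exists_cons_of_ne_nil hG
  exact gammaH_bf_node_cons_cons t (F ++ c) G

lemma gammaH_mul_sub_grH (x : H) {G : Forest} (hG : G ≠ []) :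
    gammaH (x * bf G - grH x (bf G)) = gammaH x * bf G := by
  induction x using MonoidAlgebra.induction_linear with
  | zero => simp
  | add x y hx hy => simp only [add_mul, map_add, LinearMap.add_apply, add_sub_add_comm, hx, hy]
  | single F r =>
    rw [single_eq_smul_bf, smul_mul_assoc, map_smul, LinearMap.smul_apply, ← smul_sub, map_smul,
      map_smul, smul_mul_assoc, bf_mul, grH_bf_bf]
    congr 1
    rcases eq_or_ne F [] with rfl | hF
    · rw [List.nil_append, graftRoot_nil_left, sub_self, map_zero, gammaH_bf_nil, zero_mul]
    · rw [map_sub, gammaH_bf_graftRoot hF hG, sub_zero, gammaH_bf_append hF]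

lemma grH_bf_node (x : H) (c : Forest) : grH x (bf [.node c]) = Bplus (x * bf c) := by
  induction x using MonoidAlgebra.induction_linear with
  | zero => simp
  | add x y hx hy => simp only [map_add, LinearMap.add_apply, add_mul, hx, hy]
  | single F r =>
    rw [single_eq_smul_bf, map_smul, LinearMap.smul_apply, smul_mul_assoc, map_smul, grH_bf_bf,
      bf_mul, Bplus_bf]
    rfl

section Coproduct

variable {Δ : H →ₗ[ℚ] H ⊗[ℚ] H}
  (hΔm : ∀ x y : H, Δ (x * y) = (x ⊗ₜ (1 : H)) * Δ y + Δ x * ((1 : H) ⊗ₜ y) - x ⊗ₜ y)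
  (hΔB : ∀ x : H, Δ (Bplus x) = (Bplus x) ⊗ₜ 1 + (LinearMap.lTensor H Bplus) (Δ x))
include hΔm hΔB

lemma IsPrimitive.mul_sub_grH {x : H} (hx : IsPrimitive Δ x) (t : PTree) :
    IsPrimitive Δ (x * bf [t] - grH x (bf [t])) := by
  obtain ⟨c⟩ := t
  rw [grH_bf_node, ← Bplus_bf]
  exact hx.mul_sub_map_mul hΔm hΔB (bf c)

lemma IsPrimitive.qAct {x : H} (hx : IsPrimitive Δ x) (L : List PTree) :
    IsPrimitive Δ (qAct x L) := by
  induction L generalizing x with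
  | nil => exact hx
  | cons t L ih => exact ih (hx.mul_sub_grH hΔm hΔB t)

end Coproduct

lemma gammaH_qAct (x : H) (L : List PTree) : gammaH (qAct x L) = gammaH x * bf L := by
  induction L generalizing x with
  | nil => rw [qAct, bf_nil, mul_one]
  | cons t L ih =>
    rw [qAct, ih, gammaH_mul_sub_grH x (List.cons_ne_nil t []), mul_assoc, bf_mul]
    rfl

/-- For the left-admissible-cut coproduct `Δ` of `H`, and every forest `F = t_1…t_n`,
the element `q_{n+1}·(•, t_1, …, t_n)` is primitive and is mapped by `γ` to `t_1…t_n`;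
hence it equals `γ⁻¹_{|Prim(H)}(F)`, inverting the restriction of `γ` to primitive
elements. -/
theorem qAct_primitive_gamma (Δ : H →ₗ[ℚ] H ⊗[ℚ] H)
    (hΔ1 : Δ 1 = 1 ⊗ₜ 1)
    (hΔm : ∀ x y : H, Δ (x * y) = (x ⊗ₜ (1 : H)) * Δ y + Δ x * ((1 : H) ⊗ₜ y) - x ⊗ₜ y)
    (hΔB : ∀ x : H, Δ (Bplus x) = (Bplus x) ⊗ₜ 1 + (LinearMap.lTensor H Bplus) (Δ x))
    (L : List PTree) :
    Δ (qAct (bf [PTree.node []]) L) =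
        qAct (bf [PTree.node []]) L ⊗ₜ 1 + 1 ⊗ₜ qAct (bf [PTree.node []]) L ∧
      gammaH (qAct (bf [PTree.node []]) L) = bf L := by
  have bullet_primitive : IsPrimitive Δ (bf [PTree.node []]) := by
    rw [IsPrimitive, ← Bplus_bf, bf_nil, hΔB, hΔ1, LinearMap.lTensor_tmul, add_comm]
  refine ⟨bullet_primitive.qAct hΔm hΔB L, ?_⟩
  rw [gammaH_qAct, gammaH_bf_bullet_cons, bf_nil, one_mul]
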